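/- arXiv:2402.16241 — 2 statements merged into one kernel-verified Lean document; each statement's English description precedes it below -/
import Mathlib

section
/- Let Ω ⊂ ℝ² be a bounded domain satisfying the (γ, R₀)-Reifenberg flatness condition with γ ≤ 1/96. Then the Lebesgue measure of Ω ∩ B_R(x₀) is at least C R² for every x₀ ∈ closure(Ω) and R ∈ (0, R₀], for a universal constant C > 0. -/
open MeasureTheory Metric Set

lemma coord_le_dist' (a b : EuclideanSpace ℝ (Fin 2)) : |a 0 - b 0| ≤ dist a b := by
  rw [EuclideanSpace.dist_eq]
  have h1 : |a 0 - b 0| = √(dist (a 0) (b 0) ^ 2) := by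
    rw [Real.sqrt_sq dist_nonneg, Real.dist_eq]
  rw [h1]
  apply Real.sqrt_le_sqrt
  exact Finset.single_le_sum (f := fun i => dist (a i) (b i) ^ 2)
    (fun i _ => sq_nonneg _) (Finset.mem_univ 0)

/-- For a bounded (γ, R₀)-Reifenberg flat domain Ω ⊂ ℝ² with γ ≤ 1/96,
the measure of `Ω ∩ B_R(x₀)` is at least `C R²` for every `x₀ ∈ closure Ω` and
`R ∈ (0, R₀]`, for a universal constant `C > 0`. -/
theorem stmt_1 :
    ∃ C : ℝ, 0 < C ∧
      ∀ (Ω : Set (EuclideanSpace ℝ (Fin 2))) (γ R₀ : ℝ),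
        IsOpen Ω → IsConnected Ω → Bornology.IsBounded Ω →
        0 ≤ γ → γ ≤ 1 / 96 → 0 < R₀ →
        (∀ x₀ ∈ frontier Ω, ∀ R : ℝ, 0 < R → R ≤ R₀ →
          ∃ e : EuclideanSpace ℝ (Fin 2) ≃ᵃⁱ[ℝ] EuclideanSpace ℝ (Fin 2),
            ({y | e x₀ 0 + γ * R < e y 0} ∩ ball x₀ R ⊆ Ω ∩ ball x₀ R) ∧
            (Ω ∩ ball x₀ R ⊆ {y | e x₀ 0 - γ * R < e y 0} ∩ ball x₀ R)) →
        ∀ x₀ ∈ closure Ω, ∀ R : ℝ, 0 < R → R ≤ R₀ →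
          ENNReal.ofReal (C * R ^ 2) ≤ volume (Ω ∩ ball x₀ R) := by
  set V : ENNReal := volume (ball (0 : EuclideanSpace ℝ (Fin 2)) 1) with hV
  have hVpos : 0 < V := measure_ball_pos _ _ one_pos
  have hVlt : V ≠ ⊤ := measure_ball_lt_top.ne
  have hVtpos : 0 < V.toReal := ENNReal.toReal_pos hVpos.ne' hVlt
  refine ⟨V.toReal / 64, by positivity, ?_⟩
  intro Ω γ R₀ hΩopen hΩconn hΩbdd hγ0 hγ hR₀ hRf x₀ hx₀ R hR hRR₀
  -- find z with ball z (R/8) ⊆ Ω ∩ ball x₀ R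
  obtain ⟨z, hz⟩ : ∃ z, ball z (R/8) ⊆ Ω ∩ ball x₀ R := by
    by_cases h : (ball x₀ (R/2) ∩ frontier Ω) = ∅
    · -- ball x₀ (R/2) misses frontier, so it's inside Ω
      have hsub : ball x₀ (R/2) ⊆ Ω := by
        have hcov : ball x₀ (R/2) ⊆ Ω ∪ (closure Ω)ᶜ := by
          intro w hw
          by_cases hw' : w ∈ closure Ω
          · left
            by_contra hwΩ
            have : w ∈ frontier Ω := by
              rw [hΩopen.frontier_eq]
              exact ⟨hw', hwΩ⟩
            exact absurd (Set.mem_inter hw this) (by simp [h])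
          · right; exact hw'
        have hmeet : (ball x₀ (R/2) ∩ Ω).Nonempty := by
          have := mem_closure_iff.1 hx₀ (ball x₀ (R/2)) isOpen_ball
            (mem_ball_self (by linarith))
          exact this
        exact IsPreconnected.subset_left_of_subset_union hΩopen
          isClosed_closure.isOpen_compl
          (disjoint_compl_right.mono_left subset_closure) hcov hmeet
          (convex_ball x₀ (R/2)).isPreconnected
      refine ⟨x₀, fun w hw => ⟨hsub ?_, ?_⟩⟩
      · exact ball_subset_ball (by linarith) hw
      · exact ball_subset_ball (by linarith) hw
    · obtain ⟨y, hyb, hyf⟩ := Set.nonempty_iff_ne_empty.2 h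
      obtain ⟨e, h1, _⟩ := hRf y hyf (R/2) (by linarith) (by linarith)
      set v : EuclideanSpace ℝ (Fin 2) := (R/4) • EuclideanSpace.single 0 1 with hv
      have hvnorm : ‖v‖ = R/4 := by
        rw [hv, norm_smul, EuclideanSpace.norm_single]
        simp [abs_of_pos, hR]
      set z := e.symm (e y + v) with hzdef
      have hez : e z = e y + v := e.apply_symm_apply _
      have hez0 : e z 0 = e y 0 + R/4 := by
        rw [hez]
        have : (e y + v) 0 = e y 0 + v 0 := rfl
        rw [this, hv]
        have : ((R/4) • EuclideanSpace.single (0 : Fin 2) (1:ℝ)) 0 = (R/4) * 1 := by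
          simp [EuclideanSpace.single_apply]
        rw [this]; ring
      have hdzy : dist z y = R/4 := by
        rw [← e.dist_map z y, hez, dist_eq_norm]
        simp [hvnorm]
      refine ⟨z, fun w hw => ?_⟩
      have hw8 : dist w z < R/8 := mem_ball.1 hw
      have hwy : dist w y < R/2 := by
        calc dist w y ≤ dist w z + dist z y := dist_triangle _ _ _
        _ < R/8 + R/4 := by linarith
        _ < R/2 := by linarith
      have hcoord : e y 0 + γ * (R/2) < e w 0 := by
        have hdew : |e w 0 - e z 0| ≤ dist w z := by
          have := coord_le_dist' (e w) (e z)
          rwa [e.dist_map] at this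
        have h1' : e z 0 - e w 0 ≤ |e w 0 - e z 0| := by
          rw [abs_sub_comm]; exact le_abs_self _
        rw [hez0] at h1' hdew
        nlinarith
      have hwΩ : w ∈ Ω := (h1 ⟨hcoord, mem_ball.2 hwy⟩).1
      refine ⟨hwΩ, mem_ball.2 ?_⟩
      calc dist w x₀ ≤ dist w y + dist y x₀ := dist_triangle _ _ _
      _ < R/2 + R/2 := by have := mem_ball.1 hyb; linarith
      _ = R := by ring
  -- conclude
  have hvol : volume (ball z (R/8)) = ENNReal.ofReal ((R/8)^2) * V := by
    rw [Measure.addHaar_ball _ _ (by linarith : (0:ℝ) ≤ R/8)]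
    congr 1
    · norm_num [finrank_euclideanSpace_fin]
  calc ENNReal.ofReal (V.toReal / 64 * R ^ 2)
      = ENNReal.ofReal ((R/8)^2 * V.toReal) := by ring_nf
    _ = ENNReal.ofReal ((R/8)^2) * V := by
        rw [ENNReal.ofReal_mul (by positivity), ENNReal.ofReal_toReal hVlt]
    _ = volume (ball z (R/8)) := hvol.symm
    _ ≤ volume (Ω ∩ ball x₀ R) := measure_mono hz
end

section
/- Let Ω ⊂ ℝ² be a bounded domain with |Ω| < ∞, let q₀ > 2, and let v : Ω → ℝ be measurable. Suppose there exist constants C₁ > 0 and R₀ > 0 such that for every R ∈ (0, R₀] and every y ∈ Ω, ‖v‖_{L^{q₀}(Ω \ closure(B_R(y)))} ≤ C₁ R^{−1+2/q₀}. Also suppose v is supported so that the set {|v| > t} ∩ closure(B_{1/t}(y)) has measure at most C₂ t⁻² for t > R₀⁻¹ (e.g. trivially since |B_{1/t}(y)| = π t⁻²). Then the weak-L² quasinorm sup_{t>0} t |{x ∈ Ω : |v(x)| > t}|^{1/2} is bounded by a constant depending only on C₁, R₀, |Ω|, q₀. -/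
/-!
Split the superlevel set `{|v| > t}` along the closed ball of radius `R = 1/t` around `y`.
For `t ≤ R₀⁻¹` the trivial bound `|Ω|` suffices. For `t > R₀⁻¹` the part inside the ball is
controlled by hypothesis, and the part outside by Chebyshev's inequality in `L^{q₀}`: the decay
rate `R^{-1+2/q₀}` is exactly the one for which `(C₁ R^{-1+2/q₀} / t)^{q₀} = C₁^{q₀} t⁻²` at
`R = 1/t`, which is the weak-`L²` scaling.
-/

open MeasureTheory Metric Set

theorem measure_lt_abs_inter_le_of_eLpNorm_le {α : Type*} [MeasurableSpace α] {μ : Measure α}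
    {f : α → ℝ} {s : Set α} (hf : AEStronglyMeasurable f (μ.restrict s)) {p M t : ℝ}
    (hp : 0 < p) (hM : 0 ≤ M) (ht : 0 < t)
    (hfM : eLpNorm f (ENNReal.ofReal p) (μ.restrict s) ≤ ENNReal.ofReal M) :
    μ ({x | t < |f x|} ∩ s) ≤ ENNReal.ofReal ((M / t) ^ p) := by
  have hsub : {x | t < |f x|} ⊆ {x | ENNReal.ofReal t ≤ ‖f x‖ₑ} := fun x hx => by
    simpa only [mem_ofPred_eq, Real.enorm_eq_ofReal_abs] using ENNReal.ofReal_le_ofReal hx.le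
  have hchebyshev := meas_ge_le_mul_pow_eLpNorm_enorm (μ.restrict s)
    (by simpa using hp) ENNReal.ofReal_ne_top hf (ENNReal.ofReal_pos.2 ht).ne'
    (by simp)
  rw [ENNReal.toReal_ofReal hp.le] at hchebyshev
  calc μ ({x | t < |f x|} ∩ s)
      ≤ μ.restrict s {x | ENNReal.ofReal t ≤ ‖f x‖ₑ} :=
        (Measure.le_restrict_apply _ _).trans (measure_mono hsub)
    _ ≤ (ENNReal.ofReal t)⁻¹ ^ p * ENNReal.ofReal M ^ p := by
        grw [hchebyshev, hfM]
    _ = ENNReal.ofReal ((M / t) ^ p) := by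
        rw [← ENNReal.mul_rpow_of_nonneg _ _ hp.le, ← ENNReal.ofReal_inv_of_pos ht,
          ← ENNReal.ofReal_mul (by positivity), ENNReal.ofReal_rpow_of_nonneg (by positivity) hp.le,
          inv_mul_eq_div]

theorem mul_one_div_rpow_neg_one_add_two_div_div_rpow {C t q : ℝ} (hC : 0 ≤ C) (ht : 0 < t)
    (hq : q ≠ 0) :
    (C * (1 / t) ^ (-1 + 2 / q) / t) ^ q = C ^ q * (t ^ 2)⁻¹ := by
  have hdecay : (1 / t) ^ (-1 + 2 / q) / t = t ^ (-2 / q) := by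
    rw [one_div, Real.inv_rpow ht.le, ← Real.rpow_neg ht.le, div_eq_mul_inv, ← Real.rpow_neg_one t,
      ← Real.rpow_add ht]
    ring_nf
  rw [mul_div_assoc, hdecay, Real.mul_rpow hC (by positivity), ← Real.rpow_mul ht.le,
    div_mul_cancel₀ _ hq, Real.rpow_neg ht.le, Real.rpow_two]

theorem mul_sqrt_le_sqrt_of_le_mul_inv_sq {m K t : ℝ} (ht : 0 < t) (hm : m ≤ K * (t ^ 2)⁻¹) :
    t * √m ≤ √K := by
  rw [← Real.sqrt_sq ht.le, ← Real.sqrt_mul (by positivity)]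
  refine Real.sqrt_le_sqrt ?_
  rwa [le_mul_inv_iff₀ (by positivity), mul_comm] at hm

theorem measure_superlevel_le_of_annular_decay {X : Type*} [PseudoMetricSpace X]
    [MeasurableSpace X] {μ : Measure X} {Ω : Set X} {v : X → ℝ} (hv : AEStronglyMeasurable v μ)
    {y : X} {q C₁ C₂ t : ℝ} (hq : 0 < q) (hC₁ : 0 ≤ C₁) (hC₂ : 0 ≤ C₂) (ht : 0 < t)
    (hLp : eLpNorm v (ENNReal.ofReal q) (μ.restrict (Ω \ closure (ball y (1 / t)))) ≤
      ENNReal.ofReal (C₁ * (1 / t) ^ (-1 + 2 / q)))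
    (hinner : μ ({x ∈ Ω | t < |v x|} ∩ closure (ball y (1 / t))) ≤
      ENNReal.ofReal (C₂ * (t ^ 2)⁻¹)) :
    μ {x ∈ Ω | t < |v x|} ≤ ENNReal.ofReal ((C₂ + C₁ ^ q) * (t ^ 2)⁻¹) := by
  set S := {x ∈ Ω | t < |v x|}
  set K := closure (ball y (1 / t))
  have houter : μ (S \ K) ≤ ENNReal.ofReal (C₁ ^ q * (t ^ 2)⁻¹) := by
    rw [← mul_one_div_rpow_neg_one_add_two_div_div_rpow hC₁ ht hq.ne']
    have hsub : S \ K ⊆ {x | t < |v x|} ∩ (Ω \ K) :=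
      fun x ⟨⟨hxΩ, hxv⟩, hxK⟩ => ⟨hxv, hxΩ, hxK⟩
    exact (measure_mono hsub).trans
      (measure_lt_abs_inter_le_of_eLpNorm_le hv.restrict hq (by positivity) ht hLp)
  calc μ S ≤ μ (S ∩ K) + μ (S \ K) := measure_le_inter_add_sdiff μ S K
    _ ≤ ENNReal.ofReal (C₂ * (t ^ 2)⁻¹) + ENNReal.ofReal (C₁ ^ q * (t ^ 2)⁻¹) := by
        gcongr
    _ = ENNReal.ofReal ((C₂ + C₁ ^ q) * (t ^ 2)⁻¹) := by
        rw [← ENNReal.ofReal_add (by positivity) (by positivity), add_mul]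

/-- weak-L² bound from annular `L^{q₀}` decay: if
`‖v‖_{L^{q₀}(Ω \ closure B_R(y))} ≤ C₁ R^{−1+2/q₀}` for all `R ∈ (0,R₀]` and the
superlevel sets inside `closure B_{1/t}(y)` have measure `≤ C₂ t⁻²` for `t > R₀⁻¹`,
then `sup_{t>0} t |{|v|>t}|^{1/2} ≤ C(C₁, C₂, R₀, |Ω|, q₀)`. -/
theorem stmt_5 (q₀ C₁ C₂ R₀ a : ℝ) (hq₀ : 2 < q₀) (hC₁ : 0 ≤ C₁) (hC₂ : 0 ≤ C₂)
    (hR₀ : 0 < R₀) (ha : 0 ≤ a) :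
    ∃ C : ℝ, 0 < C ∧
      ∀ (Ω : Set (EuclideanSpace ℝ (Fin 2))) (v : EuclideanSpace ℝ (Fin 2) → ℝ)
        (y : EuclideanSpace ℝ (Fin 2)),
        MeasurableSet Ω → Measurable v → volume Ω = ENNReal.ofReal a → y ∈ Ω →
        (∀ R : ℝ, 0 < R → R ≤ R₀ →
          eLpNorm v (ENNReal.ofReal q₀) (volume.restrict (Ω \ closure (ball y R))) ≤
            ENNReal.ofReal (C₁ * R ^ (-1 + 2 / q₀))) →
        (∀ t : ℝ, R₀⁻¹ < t →
          volume ({x ∈ Ω | t < |v x|} ∩ closure (ball y (1 / t))) ≤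
            ENNReal.ofReal (C₂ * (t ^ 2)⁻¹)) →
        ∀ t : ℝ, 0 < t →
          t * Real.sqrt ((volume {x ∈ Ω | t < |v x|}).toReal) ≤ C := by
  refine ⟨R₀⁻¹ * √a + √(C₂ + C₁ ^ q₀) + 1, by positivity, ?_⟩
  intro Ω v y _ hv hvol _ hLp hinner t ht
  have hsmall_nonneg : 0 ≤ R₀⁻¹ * √a := by positivity
  have hlarge_nonneg : 0 ≤ √(C₂ + C₁ ^ q₀) := Real.sqrt_nonneg _
  rcases le_or_gt t R₀⁻¹ with hsmall | hlarge
  · have hS : (volume {x ∈ Ω | t < |v x|}).toReal ≤ a :=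
      ENNReal.toReal_le_of_le_ofReal ha (hvol ▸ measure_mono (sep_subset _ _))
    have : t * √(volume {x ∈ Ω | t < |v x|}).toReal ≤ R₀⁻¹ * √a := by gcongr
    linarith
  · have hR : 1 / t ≤ R₀ := by
      rw [one_div]; exact inv_le_of_inv_le₀ hR₀ hlarge.le
    have hS := measure_superlevel_le_of_annular_decay hv.aestronglyMeasurable (by linarith)
      hC₁ hC₂ ht (hLp _ (by positivity) hR) (hinner t hlarge)
    have := mul_sqrt_le_sqrt_of_le_mul_inv_sq ht
      (ENNReal.toReal_le_of_le_ofReal (by positivity) hS)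
    linarith
end
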